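/- The RDFAwtl A_{∨,c} with states q₀,…,q₇, alphabet {a,b,c}, translucency τ(q₀)={a,b}, τ(q₁)=∅, τ(q₂)={a}, τ(q₃)={b}, τ(q₄)=∅, τ(q₅)={a}, τ(q₆)={a}, τ(q₇)={b}, and transitions δ(q₀,c)=q₁, δ(q₀,◁)=q₄, δ(q₁,a)=q₂, δ(q₁,b)=q₃, δ(q₁,◁)=Accept, δ(q₂,b)=q₁, δ(q₃,a)=q₁, δ(q₄,a)=q₅, δ(q₄,b)=q₇, δ(q₄,◁)=Accept, δ(q₅,b)=q₆, δ(q₆,b)=q₄, δ(q₇,a)=q₆ (all other values empty) accepts exactly the language L_{∨,c} = { w ∈ {a,b,c}* : |w|_c = 1 and |w|_a = |w|_b } ∪ { w ∈ {a,b}* : 2·|w|_a = |w|_b }. -/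

import Mathlib

/-- A nondeterministic finite automaton with translucent letters (NFAwtl). -/
structure NFAwtl (Q α : Type) where
  τ : Q → Set α
  I : Set Q
  F : Set Q
  δ : Q → α → Set Q
  tr : ∀ q a, a ∈ τ q → δ q a = ∅

namespace NFAwtl

variable {Q α : Type}

/-- One computation step of an NFAwtl: delete the leftmost non-translucent letter
and change state (the head returns to the left end). -/
def Step (A : NFAwtl Q α) : Q × List α → Q × List α → Prop := fun c c' =>
  ∃ u a v, c.2 = u ++ a :: v ∧ (∀ x ∈ u, x ∈ A.τ c.1) ∧ a ∉ A.τ c.1 ∧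
    c'.1 ∈ A.δ c.1 a ∧ c'.2 = u ++ v

/-- Acceptance: from some initial state, reach a configuration whose remaining
letters are all translucent for a final state. -/
def Accepts (A : NFAwtl Q α) (w : List α) : Prop :=
  ∃ q₀ ∈ A.I, ∃ q w', Relation.ReflTransGen A.Step (q₀, w) (q, w') ∧
    (∀ x ∈ w', x ∈ A.τ q) ∧ q ∈ A.F

def lang (A : NFAwtl Q α) : Set (List α) := { w | A.Accepts w }

/-- A DFAwtl: single initial state and at most one transition per state/letter. -/
def Deterministic (A : NFAwtl Q α) : Prop :=
  (∃ q₀, A.I = {q₀}) ∧ ∀ q a, (A.δ q a).Subsingleton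

end NFAwtl

/-- A repetitive NFAwtl (RNFAwtl): on the end-of-tape marker it may accept
(states in `Facc`) or change state via `δend` and continue. -/
structure RNFAwtl (Q α : Type) where
  τ : Q → Set α
  I : Set Q
  δ : Q → α → Set Q
  δend : Q → Set Q
  Facc : Set Q
  tr : ∀ q a, a ∈ τ q → δ q a = ∅
  accEnd : ∀ q, q ∈ Facc → δend q = ∅

namespace RNFAwtl

variable {Q α : Type}

/-- One computation step of an RNFAwtl: either delete the leftmost
non-translucent letter, or, when all remaining letters are translucent,
change state via a `◁`-transition and continue. -/
def Step (A : RNFAwtl Q α) : Q × List α → Q × List α → Prop := fun c c' =>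
  (∃ u a v, c.2 = u ++ a :: v ∧ (∀ x ∈ u, x ∈ A.τ c.1) ∧ a ∉ A.τ c.1 ∧
    c'.1 ∈ A.δ c.1 a ∧ c'.2 = u ++ v)
  ∨ ((∀ x ∈ c.2, x ∈ A.τ c.1) ∧ c'.1 ∈ A.δend c.1 ∧ c'.2 = c.2)

def Accepts (A : RNFAwtl Q α) (w : List α) : Prop :=
  ∃ q₀ ∈ A.I, ∃ q w', Relation.ReflTransGen A.Step (q₀, w) (q, w') ∧
    (∀ x ∈ w', x ∈ A.τ q) ∧ q ∈ A.Facc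

def lang (A : RNFAwtl Q α) : Set (List α) := { w | A.Accepts w }

/-- An RDFAwtl: single initial state and deterministic transitions. -/
def Deterministic (A : RNFAwtl Q α) : Prop :=
  (∃ q₀, A.I = {q₀}) ∧ (∀ q a, (A.δ q a).Subsingleton) ∧ ∀ q, (A.δend q).Subsingleton

end RNFAwtl

/-- A non-returning repetitive NFAwtl (nr-NFAwtl): the head continues from the
position of the last deleted letter; on the end-of-tape marker it may change
state and return the head to the left end. -/
structure NrNFAwtl (Q α : Type) where
  τ : Q → Set α
  I : Set Q
  δ : Q → α → Set Q
  δend : Q → Set Q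
  Facc : Set Q
  tr : ∀ q a, a ∈ τ q → δ q a = ∅
  accEnd : ∀ q, q ∈ Facc → δend q = ∅

namespace NrNFAwtl

variable {Q α : Type}

/-- Configurations are `(x, q, w)`: `x` is the already-skipped prefix, the head
is on the first letter of `w`. -/
def Step (A : NrNFAwtl Q α) :
    List α × Q × List α → List α × Q × List α → Prop := fun c c' =>
  (∃ u a v, c.2.2 = u ++ a :: v ∧ (∀ x ∈ u, x ∈ A.τ c.2.1) ∧ a ∉ A.τ c.2.1 ∧
    c'.2.1 ∈ A.δ c.2.1 a ∧ c'.1 = c.1 ++ u ∧ c'.2.2 = v)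
  ∨ ((∀ x ∈ c.2.2, x ∈ A.τ c.2.1) ∧ c'.2.1 ∈ A.δend c.2.1 ∧ c'.1 = [] ∧
    c'.2.2 = c.1 ++ c.2.2)

def Accepts (A : NrNFAwtl Q α) (w : List α) : Prop :=
  ∃ q₀ ∈ A.I, ∃ x q w', Relation.ReflTransGen A.Step ([], q₀, w) (x, q, w') ∧
    (∀ y ∈ w', y ∈ A.τ q) ∧ q ∈ A.Facc

def lang (A : NrNFAwtl Q α) : Set (List α) := { w | A.Accepts w }

def Deterministic (A : NrNFAwtl Q α) : Prop :=
  (∃ q₀, A.I = {q₀}) ∧ (∀ q a, (A.δ q a).Subsingleton) ∧ ∀ q, (A.δend q).Subsingleton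

end NrNFAwtl

/-- A non-repetitive non-returning NFAwtl (nr-nr-NFAwtl): non-returning, and it
must halt as soon as all remaining letters to the right are translucent. -/
structure NrnrNFAwtl (Q α : Type) where
  τ : Q → Set α
  I : Set Q
  F : Set Q
  δ : Q → α → Set Q
  tr : ∀ q a, a ∈ τ q → δ q a = ∅

namespace NrnrNFAwtl

variable {Q α : Type}

def Step (A : NrnrNFAwtl Q α) :
    List α × Q × List α → List α × Q × List α → Prop := fun c c' =>
  ∃ u a v, c.2.2 = u ++ a :: v ∧ (∀ x ∈ u, x ∈ A.τ c.2.1) ∧ a ∉ A.τ c.2.1 ∧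
    c'.2.1 ∈ A.δ c.2.1 a ∧ c'.1 = c.1 ++ u ∧ c'.2.2 = v

def Accepts (A : NrnrNFAwtl Q α) (w : List α) : Prop :=
  ∃ q₀ ∈ A.I, ∃ x q w', Relation.ReflTransGen A.Step ([], q₀, w) (x, q, w') ∧
    (∀ y ∈ w', y ∈ A.τ q) ∧ q ∈ A.F

def lang (A : NrnrNFAwtl Q α) : Set (List α) := { w | A.Accepts w }

def Deterministic (A : NrnrNFAwtl Q α) : Prop :=
  (∃ q₀, A.I = {q₀}) ∧ ∀ q a, (A.δ q a).Subsingleton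

end NrnrNFAwtl

/-- Language classes. -/
def NFAwtlLangs (α : Type) [Fintype α] : Set (Set (List α)) :=
  { L | ∃ (Q : Type) (_ : Fintype Q) (A : NFAwtl Q α), A.lang = L }

def DFAwtlLangs (α : Type) [Fintype α] : Set (Set (List α)) :=
  { L | ∃ (Q : Type) (_ : Fintype Q) (A : NFAwtl Q α), A.Deterministic ∧ A.lang = L }

def RNFAwtlLangs (α : Type) [Fintype α] : Set (Set (List α)) :=
  { L | ∃ (Q : Type) (_ : Fintype Q) (A : RNFAwtl Q α), A.lang = L }

def RDFAwtlLangs (α : Type) [Fintype α] : Set (Set (List α)) :=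
  { L | ∃ (Q : Type) (_ : Fintype Q) (A : RNFAwtl Q α), A.Deterministic ∧ A.lang = L }

def NrNFAwtlLangs (α : Type) [Fintype α] : Set (Set (List α)) :=
  { L | ∃ (Q : Type) (_ : Fintype Q) (A : NrNFAwtl Q α), A.lang = L }

def NrDFAwtlLangs (α : Type) [Fintype α] : Set (Set (List α)) :=
  { L | ∃ (Q : Type) (_ : Fintype Q) (A : NrNFAwtl Q α), A.Deterministic ∧ A.lang = L }

def NrnrNFAwtlLangs (α : Type) [Fintype α] : Set (Set (List α)) :=
  { L | ∃ (Q : Type) (_ : Fintype Q) (A : NrnrNFAwtl Q α), A.lang = L }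

def NrnrDFAwtlLangs (α : Type) [Fintype α] : Set (Set (List α)) :=
  { L | ∃ (Q : Type) (_ : Fintype Q) (A : NrnrNFAwtl Q α), A.Deterministic ∧ A.lang = L }

/-- The three-letter alphabet {a, b, c}. -/
inductive Al : Type
  | a | b | c
deriving DecidableEq

instance instFintypeAl : Fintype Al :=
  ⟨{Al.a, Al.b, Al.c}, fun x => by cases x <;> simp⟩

/-- The language L_{∨,c} = { w ∈ {a,b,c}* : |w|_c = 1, |w|_a = |w|_b }
    ∪ { w ∈ {a,b}* : 2·|w|_a = |w|_b }. -/
def Lvc : Set (List Al) :=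
  { w | w.count Al.c = 1 ∧ w.count Al.a = w.count Al.b } ∪
  { w | Al.c ∉ w ∧ 2 * w.count Al.a = w.count Al.b }

/-- The eight states q₀, …, q₇ of the RDFAwtl A_{∨,c}. -/
inductive St : Type
  | q0 | q1 | q2 | q3 | q4 | q5 | q6 | q7
deriving DecidableEq

instance instFintypeSt : Fintype St :=
  ⟨{St.q0, St.q1, St.q2, St.q3, St.q4, St.q5, St.q6, St.q7}, fun x => by cases x <;> simp⟩

open St Al

def τf : St → Set Al
  | q0 => {a, b} | q1 => ∅ | q2 => {a} | q3 => {b}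
  | q4 => ∅      | q5 => {a} | q6 => {a} | q7 => {b}

def δf : St → Al → Set St
  | q0, c => {q1}
  | q1, a => {q2} | q1, b => {q3}
  | q2, b => {q1} | q3, a => {q1}
  | q4, a => {q5} | q4, b => {q7}
  | q5, b => {q6} | q6, b => {q4} | q7, a => {q6}
  | _, _ => ∅

def δendf : St → Set St
  | q0 => {q4}
  | _ => ∅

/-!
Every transition of `Avc` changes the letter counts by a fixed amount, so attaching to each state
a linear condition on `(|w|_a, |w|_b, |w|_c)` (`Avc.Inv`) gives a property that is inherited by
predecessor configurations and holds in the accepting ones: this is soundness. Conversely, on a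
`c`-free word the cycles `q₁ → q₂ → q₁`, `q₁ → q₃ → q₁` delete one `a` and one `b`, and the cycles
`q₄ → q₅ → q₆ → q₄`, `q₄ → q₇ → q₆ → q₄` delete one `a` and two `b`s, because a state translucent
for one of the two letters deletes the first occurrence of the other. Induction on the length
of the word gives completeness.
-/

namespace RNFAwtl

variable {Q α : Type} (A : RNFAwtl Q α)

theorem step_append_cons {q q' : Q} {u v : List α} {x : α} (hu : ∀ y ∈ u, y ∈ A.τ q)
    (hx : x ∉ A.τ q) (hq' : q' ∈ A.δ q x) : A.Step (q, u ++ x :: v) (q', u ++ v) :=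
  Or.inl ⟨u, x, v, rfl, hu, hx, hq', rfl⟩

theorem step_cons {q q' : Q} {w : List α} {x : α} (hx : x ∉ A.τ q) (hq' : q' ∈ A.δ q x) :
    A.Step (q, x :: w) (q', w) :=
  A.step_append_cons (u := []) (by simp) hx hq'

theorem step_erase [DecidableEq α] {q q' : Q} {w : List α} {x : α} (hxw : x ∈ w)
    (hw : ∀ y ∈ w, y ≠ x → y ∈ A.τ q) (hx : x ∉ A.τ q) (hq' : q' ∈ A.δ q x) :
    A.Step (q, w) (q', w.erase x) := by
  obtain ⟨u, v, hxu, rfl, herase⟩ := List.exists_erase_eq hxw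
  rw [herase]
  refine A.step_append_cons (fun y hy => hw y (by simp [hy]) ?_) hx hq'
  rintro rfl
  exact hxu hy

theorem step_end {q q' : Q} {w : List α} (hw : ∀ y ∈ w, y ∈ A.τ q)
    (hq' : q' ∈ A.δend q) : A.Step (q, w) (q', w) :=
  Or.inr ⟨hw, hq', rfl⟩

theorem lang_subset_of_invariant {P : Q → List α → Prop} {L : Set (List α)}
    (hstep : ∀ q w q' w', A.Step (q, w) (q', w') → P q' w' → P q w)
    (hacc : ∀ q ∈ A.Facc, ∀ w, (∀ y ∈ w, y ∈ A.τ q) → P q w)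
    (hinit : ∀ q ∈ A.I, ∀ w, P q w → w ∈ L) : A.lang ⊆ L := by
  rintro w ⟨q₀, hq₀, q, w', hrun, hw', hq⟩
  refine hinit q₀ hq₀ w ?_
  suffices h : ∀ c, Relation.ReflTransGen A.Step c (q, w') → P c.1 c.2 from h _ hrun
  intro c hc
  induction hc using Relation.ReflTransGen.head_induction_on with
  | refl => exact hacc q hq w' hw'
  | head hstep' _ ih => exact hstep _ _ _ _ hstep' ih

end RNFAwtl

def Avc : RNFAwtl St Al where
  τ := τf
  I := {q0}
  δ := δf
  δend := δendf
  Facc := {q1, q4}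
  tr q x h := by cases q <;> cases x <;> simp_all [τf, δf]
  accEnd q h := by rcases h with rfl | rfl <;> rfl

namespace Avc

theorem deterministic : Avc.Deterministic := by
  refine ⟨⟨q0, rfl⟩, fun q x => ?_, fun q => ?_⟩
  · cases q <;> cases x <;> simp [Avc, δf]
  · cases q <;> simp [Avc, δendf]

def Inv : St → List Al → Prop
  | q0, w => w ∈ Lvc
  | q1, w => c ∉ w ∧ w.count a = w.count b
  | q2, w => c ∉ w ∧ w.count a + 1 = w.count b
  | q3, w => c ∉ w ∧ w.count a = w.count b + 1
  | q4, w => c ∉ w ∧ 2 * w.count a = w.count b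
  | q5, w => c ∉ w ∧ 2 * w.count a + 2 = w.count b
  | q6, w => c ∉ w ∧ 2 * w.count a + 1 = w.count b
  | q7, w => c ∉ w ∧ 2 * w.count a = w.count b + 1

theorem inv_of_step {q q' : St} {w w' : List Al} (h : Avc.Step (q, w) (q', w'))
    (h' : Inv q' w') : Inv q w := by
  rcases h with ⟨u, x, v, rfl, -, -, hq', rfl⟩ | ⟨-, hq', rfl⟩
  · cases q <;> cases x <;>
      simp only [Avc, δf, Set.mem_singleton_iff, Set.mem_empty_iff_false] at hq' <;> subst hq' <;>
      simp [Inv, Lvc, List.count_append, ← List.count_eq_zero] at h' ⊢ <;> omega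
  · cases q <;> simp only [Avc, δendf, Set.mem_singleton_iff, Set.mem_empty_iff_false] at hq'
    subst hq'
    exact Or.inr h'

theorem lang_subset_Lvc : Avc.lang ⊆ Lvc := by
  refine Avc.lang_subset_of_invariant (P := Inv) (fun _ _ _ _ => inv_of_step) ?_ ?_
  · rintro q (rfl | rfl) w hw <;>
    · obtain rfl : w = [] := List.eq_nil_iff_forall_not_mem.mpr fun y hy => by
        simpa [Avc, τf] using hw y hy
      simp [Inv]
  · rintro q rfl w hw
    exact hw

theorem step_erase_other {q q' : St} {x : Al} (y : Al) {w : List Al} (hτ : τf q = {y})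
    (hq' : q' ∈ δf q x) (hc : c ∉ w) (hx : x ∈ w) (hxy : x ≠ y := by decide)
    (hy : y ≠ c := by decide) :
    Avc.Step (q, w) (q', w.erase x) := by
  refine Avc.step_erase hx (fun z hz hzx => ?_) (by simpa [Avc, hτ] using hxy) hq'
  have hzc : z ≠ c := fun h => hc (h ▸ hz)
  have hxc : x ≠ c := fun h => hc (h ▸ hx)
  simp only [Avc, hτ, Set.mem_singleton_iff]
  cases x <;> cases y <;> cases z <;> simp_all

theorem reaches_q1_nil : ∀ w : List Al, c ∉ w → w.count a = w.count b →
    Relation.ReflTransGen Avc.Step (q1, w) (q1, [])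
  | [], _, _ => .refl
  | .a :: w, hc, hab => by
    have hcw : c ∉ w := fun h => hc (List.mem_cons_of_mem _ h)
    have hb : b ∈ w := List.count_pos_iff.mp (by simp at hab; omega)
    refine .head (Avc.step_cons (by simp [Avc, τf]) (Set.mem_singleton _)) <|
      .head (step_erase_other a rfl (Set.mem_singleton _) hcw hb) <|
      reaches_q1_nil _ (fun h => hcw (List.mem_of_mem_erase h)) (by simp at hab ⊢; omega)
  | .b :: w, hc, hab => by
    have hcw : c ∉ w := fun h => hc (List.mem_cons_of_mem _ h)
    have ha : a ∈ w := List.count_pos_iff.mp (by simp at hab; omega)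
    refine .head (Avc.step_cons (by simp [Avc, τf]) (Set.mem_singleton _)) <|
      .head (step_erase_other b rfl (Set.mem_singleton _) hcw ha) <|
      reaches_q1_nil _ (fun h => hcw (List.mem_of_mem_erase h)) (by simp at hab ⊢; omega)
  | .c :: _, hc, _ => absurd List.mem_cons_self hc
termination_by w => w.length
decreasing_by all_goals exact Nat.lt_succ_of_le List.length_erase_le

theorem reaches_q4_nil : ∀ w : List Al, c ∉ w → 2 * w.count a = w.count b →
    Relation.ReflTransGen Avc.Step (q4, w) (q4, [])
  | [], _, _ => .refl
  | .a :: w, hc, hab => by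
    have hcw : c ∉ w := fun h => hc (List.mem_cons_of_mem _ h)
    have hcw' : c ∉ w.erase b := fun h => hcw (List.mem_of_mem_erase h)
    have hb : b ∈ w := List.count_pos_iff.mp (by simp at hab; omega)
    have hb' : b ∈ w.erase b := List.count_pos_iff.mp (by simp at hab ⊢; omega)
    refine .head (Avc.step_cons (by simp [Avc, τf]) (Set.mem_singleton _)) <|
      .head (step_erase_other a rfl (Set.mem_singleton _) hcw hb) <|
      .head (step_erase_other a rfl (Set.mem_singleton _) hcw' hb') <|
      reaches_q4_nil _ (fun h => hcw' (List.mem_of_mem_erase h)) (by simp at hab ⊢; omega)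
  | .b :: w, hc, hab => by
    have hcw : c ∉ w := fun h => hc (List.mem_cons_of_mem _ h)
    have hcw' : c ∉ w.erase a := fun h => hcw (List.mem_of_mem_erase h)
    have ha : a ∈ w := List.count_pos_iff.mp (by simp at hab; omega)
    have hb' : b ∈ w.erase a :=
      (List.mem_erase_of_ne (by decide)).mpr (List.count_pos_iff.mp (by simp at hab; omega))
    refine .head (Avc.step_cons (by simp [Avc, τf]) (Set.mem_singleton _)) <|
      .head (step_erase_other b rfl (Set.mem_singleton _) hcw ha) <|
      .head (step_erase_other a rfl (Set.mem_singleton _) hcw' hb') <|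
      reaches_q4_nil _ (fun h => hcw' (List.mem_of_mem_erase h)) (by simp at hab ⊢; omega)
  | .c :: _, hc, _ => absurd List.mem_cons_self hc
termination_by w => w.length
decreasing_by all_goals exact Nat.lt_succ_of_le (List.length_erase_le.trans List.length_erase_le)

theorem Lvc_subset_lang : Lvc ⊆ Avc.lang := by
  rintro w (⟨hc, hab⟩ | ⟨hc, hab⟩)
  · have hcw : c ∈ w := List.count_pos_iff.mp (by omega)
    have hcw' : c ∉ w.erase c := List.count_eq_zero.mp (by simp [hc])
    have hstep : Avc.Step (q0, w) (q1, w.erase c) :=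
      Avc.step_erase hcw (fun y _ hy => by cases y <;> simp_all [Avc, τf]) (by simp [Avc, τf])
        (Set.mem_singleton _)
    exact ⟨q0, rfl, q1, [], .head hstep (reaches_q1_nil _ hcw' (by simpa using hab)), by simp,
      Or.inl rfl⟩
  · have hstep : Avc.Step (q0, w) (q4, w) :=
      Avc.step_end (fun y hy => by cases y <;> simp_all [Avc, τf]) (by simp [Avc, δendf])
    exact ⟨q0, rfl, q4, [], .head hstep (reaches_q4_nil w hc hab), by simp, Or.inr rfl⟩

end Avc

/-- the RDFAwtl A_{∨,c} (with the given translucency mapping and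
transitions, accepting on ◁ in states q₁ and q₄) accepts exactly L_{∨,c}. -/
theorem Avc_accepts_Lvc :
    ∃ A : RNFAwtl St Al,
      A.I = {q0} ∧ A.τ = τf ∧ A.δ = δf ∧ A.δend = δendf ∧ A.Facc = {q1, q4} ∧
      A.Deterministic ∧ A.lang = Lvc :=
  ⟨Avc, rfl, rfl, rfl, rfl, rfl, Avc.deterministic,
    Avc.lang_subset_Lvc.antisymm Avc.Lvc_subset_lang⟩
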